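/- With the anisotropic distance d*(Δ, α, δ) = √(Δᵀ Rᵀ(α) S(δ)² R(α) Δ), one has d*(Δ, α + π/2, 1/δ) = d*(Δ, α, δ) for all Δ ∈ ℝ², α ∈ ℝ, δ > 0. Hence the anisotropic Matérn parametrization is not identifiable: (α, δ) and (α + π/2, 1/δ) yield identical correlations. -/

import Mathlib

open Real Matrix

/-!
Rotating by a further quarter turn swaps the two coordinate axes, and inverting `δ` swaps the two
diagonal entries of `S(δ)²`; the two swaps cancel in `R(α)ᵀ S(δ)² R(α)`, hence in `d*`.
-/

lemma quarterTurn_transpose_mul_diagonal_mul {K : Type*} [CommRing K] (a b : K) :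
    (!![0, 1; -1, 0] : Matrix (Fin 2) (Fin 2) K)ᵀ * !![a, 0; 0, b] * !![0, 1; -1, 0] =
      !![b, 0; 0, a] := by
  ext i j
  fin_cases i <;> fin_cases j <;> simp [Matrix.mul_apply, Fin.sum_univ_two]

lemma rotation_add_pi_div_two (α : ℝ) :
    !![cos (α + π / 2), sin (α + π / 2); -sin (α + π / 2), cos (α + π / 2)] =
      !![0, 1; -1, 0] * !![cos α, sin α; -sin α, cos α] := by
  rw [cos_add_pi_div_two, sin_add_pi_div_two]
  ext i j
  fin_cases i <;> fin_cases j <;> simp [Matrix.mul_apply, Fin.sum_univ_two]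

lemma rotation_add_pi_div_two_conj_inv (α δ : ℝ) :
    (!![cos (α + π / 2), sin (α + π / 2); -sin (α + π / 2), cos (α + π / 2)])ᵀ *
        !![1 / δ, 0; 0, 1 / (1 / δ)] *
        !![cos (α + π / 2), sin (α + π / 2); -sin (α + π / 2), cos (α + π / 2)] =
      (!![cos α, sin α; -sin α, cos α])ᵀ * !![δ, 0; 0, 1 / δ] *
        !![cos α, sin α; -sin α, cos α] := by
  rw [rotation_add_pi_div_two, one_div_one_div, ← quarterTurn_transpose_mul_diagonal_mul (1 / δ) δ]
  simp only [transpose_mul, Matrix.mul_assoc]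

theorem stmt4_general
    (R : ℝ → Matrix (Fin 2) (Fin 2) ℝ)
    (hR : ∀ α : ℝ, R α = !![Real.cos α, Real.sin α; -Real.sin α, Real.cos α])
    (S2 : ℝ → Matrix (Fin 2) (Fin 2) ℝ)
    (hS2 : ∀ δ : ℝ, S2 δ = !![δ, 0; 0, 1/δ])
    (dstar : (Fin 2 → ℝ) → ℝ → ℝ → ℝ)
    (hdstar : ∀ (Δ : Fin 2 → ℝ) (α δ : ℝ),
      dstar Δ α δ = Real.sqrt (Δ ⬝ᵥ ((R α)ᵀ * S2 δ * R α).mulVec Δ))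
    (Δ : Fin 2 → ℝ) (α δ : ℝ) :
    dstar Δ (α + Real.pi / 2) (1/δ) = dstar Δ α δ := by
  rw [hdstar, hdstar, hR, hR, hS2, hS2, rotation_add_pi_div_two_conj_inv]

/-- The anisotropic distance `d*(Δ, α, δ)` is unchanged under `(α, δ) ↦ (α + π/2, 1/δ)`, so the parametrization is not identifiable. -/
theorem stmt4
    (R : ℝ → Matrix (Fin 2) (Fin 2) ℝ)
    (hR : ∀ α : ℝ, R α = !![Real.cos α, Real.sin α; -Real.sin α, Real.cos α])
    (S2 : ℝ → Matrix (Fin 2) (Fin 2) ℝ)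
    (hS2 : ∀ δ : ℝ, S2 δ = !![δ, 0; 0, 1/δ])
    (dstar : (Fin 2 → ℝ) → ℝ → ℝ → ℝ)
    (hdstar : ∀ (Δ : Fin 2 → ℝ) (α δ : ℝ),
      dstar Δ α δ = Real.sqrt (Δ ⬝ᵥ ((R α)ᵀ * S2 δ * R α).mulVec Δ))
    (Δ : Fin 2 → ℝ) (α δ : ℝ) (hδ : 0 < δ) :
    dstar Δ (α + Real.pi / 2) (1/δ) = dstar Δ α δ :=
  stmt4_general R hR S2 hS2 dstar hdstar Δ α δ
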